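/- Let N ≥ 2 and let a₀, a₁, a₂ be nonnegative integers, not all equal, with a₀ + a₁ + a₂ = N. Let α₀, α₁, α₂ be three distinct real numbers such that α₀³ − α₀ = α₁³ − α₁ = α₂³ − α₂ and a₀α₀ + a₁α₁ + a₂α₂ = 0. Then α₀ + α₁ + α₂ = 0, and there exists ε ∈ {−1, 1} such that α₀ = ε(a₁ − a₂)√R, α₁ = ε(a₂ − a₀)√R, α₂ = ε(a₀ − a₁)√R, where R = 1/(a₀² + a₁² + a₂² − a₀a₁ − a₀a₂ − a₁a₂). -/
import Mathlib


/-- Explicit form of the coordinates of stationary points of the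
uncoupled constrained system: three distinct reals with equal values of `ξ³ - ξ`
and vanishing weighted sum are proportional to the differences of the multiplicities. -/
theorem stmt_0 (N a₀ a₁ a₂ : ℕ) (hN : 2 ≤ N) (hsum : a₀ + a₁ + a₂ = N)
    (hne : ¬(a₀ = a₁ ∧ a₁ = a₂))
    (α₀ α₁ α₂ : ℝ) (h01 : α₀ ≠ α₁) (h02 : α₀ ≠ α₂) (h12 : α₁ ≠ α₂)
    (he1 : α₀ ^ 3 - α₀ = α₁ ^ 3 - α₁) (he2 : α₁ ^ 3 - α₁ = α₂ ^ 3 - α₂)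
    (hzero : (a₀ : ℝ) * α₀ + (a₁ : ℝ) * α₁ + (a₂ : ℝ) * α₂ = 0) :
    α₀ + α₁ + α₂ = 0 ∧
    ∃ ε : ℝ, (ε = -1 ∨ ε = 1) ∧
      α₀ = ε * ((a₁ : ℝ) - (a₂ : ℝ)) *
        Real.sqrt (1 / ((a₀ : ℝ) ^ 2 + (a₁ : ℝ) ^ 2 + (a₂ : ℝ) ^ 2
          - (a₀ : ℝ) * (a₁ : ℝ) - (a₀ : ℝ) * (a₂ : ℝ) - (a₁ : ℝ) * (a₂ : ℝ))) ∧
      α₁ = ε * ((a₂ : ℝ) - (a₀ : ℝ)) *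
        Real.sqrt (1 / ((a₀ : ℝ) ^ 2 + (a₁ : ℝ) ^ 2 + (a₂ : ℝ) ^ 2
          - (a₀ : ℝ) * (a₁ : ℝ) - (a₀ : ℝ) * (a₂ : ℝ) - (a₁ : ℝ) * (a₂ : ℝ))) ∧
      α₂ = ε * ((a₀ : ℝ) - (a₁ : ℝ)) *
        Real.sqrt (1 / ((a₀ : ℝ) ^ 2 + (a₁ : ℝ) ^ 2 + (a₂ : ℝ) ^ 2
          - (a₀ : ℝ) * (a₁ : ℝ) - (a₀ : ℝ) * (a₂ : ℝ) - (a₁ : ℝ) * (a₂ : ℝ))) := by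
  set A₀ := (a₀ : ℝ); set A₁ := (a₁ : ℝ); set A₂ := (a₂ : ℝ)
  -- quadratic relations
  have h1 : α₀ ^ 2 + α₀ * α₁ + α₁ ^ 2 = 1 := by
    have hd : α₀ - α₁ ≠ 0 := sub_ne_zero.mpr h01
    have : (α₀ - α₁) * (α₀ ^ 2 + α₀ * α₁ + α₁ ^ 2) = (α₀ - α₁) * 1 := by
      ring_nf; nlinarith [he1]
    exact mul_left_cancel₀ hd this
  have h2 : α₀ ^ 2 + α₀ * α₂ + α₂ ^ 2 = 1 := by
    have hd : α₀ - α₂ ≠ 0 := sub_ne_zero.mpr h02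
    have he : α₀ ^ 3 - α₀ = α₂ ^ 3 - α₂ := he1.trans he2
    have : (α₀ - α₂) * (α₀ ^ 2 + α₀ * α₂ + α₂ ^ 2) = (α₀ - α₂) * 1 := by
      ring_nf; nlinarith [he]
    exact mul_left_cancel₀ hd this
  have hsum0 : α₀ + α₁ + α₂ = 0 := by
    have hd : α₁ - α₂ ≠ 0 := sub_ne_zero.mpr h12
    have h3 : (α₁ - α₂) * (α₀ + α₁ + α₂) = 0 := by nlinarith [h1, h2]
    have := mul_eq_zero.mp h3
    rcases this with h | h
    · exact absurd h hd
    · exact h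
  refine ⟨hsum0, ?_⟩
  -- positivity of the denominator
  have hDne : ¬(A₀ = A₁ ∧ A₁ = A₂) := by
    rintro ⟨e1, e2⟩
    exact hne ⟨Nat.cast_injective e1, Nat.cast_injective e2⟩
  set D := A₀ ^ 2 + A₁ ^ 2 + A₂ ^ 2 - A₀ * A₁ - A₀ * A₂ - A₁ * A₂ with hDdef
  have hD : 0 < D := by
    rcases eq_or_ne A₀ A₁ with e1 | e1
    · rcases eq_or_ne A₁ A₂ with e2 | e2
      · exact absurd ⟨e1, e2⟩ hDne
      · have h' : A₁ - A₂ ≠ 0 := sub_ne_zero.mpr e2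
        have hp : 0 < (A₁ - A₂) ^ 2 := by positivity
        nlinarith [sq_nonneg (A₀ - A₁), sq_nonneg (A₀ - A₂)]
    · have h' : A₀ - A₁ ≠ 0 := sub_ne_zero.mpr e1
      have hp : 0 < (A₀ - A₁) ^ 2 := by positivity
      nlinarith [sq_nonneg (A₁ - A₂), sq_nonneg (A₀ - A₂)]
  have hD0 : D ≠ 0 := ne_of_gt hD
  -- linear relation
  have hlin : (A₀ - A₂) * α₀ + (A₁ - A₂) * α₁ = 0 := by
    have : α₂ = -α₀ - α₁ := by linarith
    rw [this] at hzero; linarith [hzero]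
  -- get the proportionality factor t
  obtain ⟨t, ht0, ht1, ht2⟩ :
      ∃ t : ℝ, α₀ = t * (A₁ - A₂) ∧ α₁ = t * (A₂ - A₀) ∧ α₂ = t * (A₀ - A₁) := by
    rcases eq_or_ne A₁ A₂ with e | e
    · -- then A₀ ≠ A₁, and α₀ = 0
      have hA01 : A₀ ≠ A₂ := by
        intro h; exact hDne ⟨h.trans e.symm, e⟩
      have hα₀ : α₀ = 0 := by
        have h' : (A₀ - A₂) * α₀ = 0 := by rw [e] at hlin; linarith
        rcases mul_eq_zero.mp h' with h | h
        · exact absurd (by linarith [sub_eq_zero.mp h] : A₀ = A₂) hA01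
        · exact h
      have hd : A₂ - A₀ ≠ 0 := sub_ne_zero.mpr (Ne.symm hA01)
      refine ⟨α₁ / (A₂ - A₀), ?_, ?_, ?_⟩
      · rw [e, hα₀]; ring
      · rw [div_mul_cancel₀ _ hd]
      · have : α₂ = -α₁ := by rw [hα₀] at hsum0; linarith
        rw [this, e]; field_simp; ring
    · have hd : A₁ - A₂ ≠ 0 := sub_ne_zero.mpr e
      refine ⟨α₀ / (A₁ - A₂), ?_, ?_, ?_⟩
      · field_simp
      · have : α₁ * (A₁ - A₂) = α₀ / (A₁ - A₂) * (A₂ - A₀) * (A₁ - A₂) := by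
          field_simp; nlinarith [hlin]
        exact mul_right_cancel₀ hd this
      · have hα₁ : α₁ = α₀ / (A₁ - A₂) * (A₂ - A₀) := by
          have : α₁ * (A₁ - A₂) = α₀ / (A₁ - A₂) * (A₂ - A₀) * (A₁ - A₂) := by
            field_simp; nlinarith [hlin]
          exact mul_right_cancel₀ hd this
        have : α₂ = -α₀ - α₁ := by linarith
        rw [this, hα₁]; field_simp; ring
  have htD : t ^ 2 * D = 1 := by
    rw [ht0, ht1] at h1
    rw [hDdef]; linear_combination h1
  have ht_ne : t ≠ 0 := by
    intro h; rw [h] at htD; simp at htD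
  have hsqrt : Real.sqrt (1 / D) = |t| := by
    have h1D : 1 / D = t ^ 2 := by field_simp at htD ⊢; linarith [htD]
    rw [h1D, Real.sqrt_sq_eq_abs]
  rcases lt_or_gt_of_ne ht_ne with hlt | hgt
  · refine ⟨-1, Or.inl rfl, ?_, ?_, ?_⟩ <;>
      rw [hsqrt, abs_of_neg hlt] <;> [rw [ht0]; rw [ht1]; rw [ht2]] <;> ring
  · refine ⟨1, Or.inr rfl, ?_, ?_, ?_⟩ <;>
      rw [hsqrt, abs_of_pos hgt] <;> [rw [ht0]; rw [ht1]; rw [ht2]] <;> ring
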